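/- Let G be a finite simple graph and v a vertex with deg(v) ≤ 4. Then E_G(v) ≤ 2, with equality if and only if the connected component of v is a star on 5 vertices (four leaves) with v as its center. -/

import Mathlib

/-!
Write `S = |A|`. It is positive semidefinite with `S² = A²`, so
`∑ⱼ S_{vj}² = (A²)_{vv} = deg v ≤ 4` and hence `0 ≤ S_{vv} ≤ 2`. Equality forces `S_{vj} = 0` for
`j ≠ v`, i.e. `S e_v = 2 e_v`; since `S` is positive semidefinite this is equivalent to
`A² e_v = 4 e_v`, which says that `deg v = 4` and that no vertex other than `v` shares a neighbour
with `v`, i.e. the component of `v` is a star centred at `v`.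
-/

open Matrix Finset

/-- The energy of the vertex `i` of a finite simple graph `G`:
the `(i,i)` entry of `|A| = (A Aᴴ)^{1/2}`, where `A` is the adjacency matrix. -/
noncomputable def vertexEnergy {n : ℕ} (G : SimpleGraph (Fin n)) [DecidableRel G.Adj]
    (i : Fin n) : ℝ :=
  ((Matrix.posSemidef_self_mul_conjTranspose (G.adjMatrix ℝ)).1.eigenvectorUnitary.1 *
    diagonal ((RCLike.ofReal : ℝ → ℝ) ∘ (√·) ∘ (Matrix.posSemidef_self_mul_conjTranspose (G.adjMatrix ℝ)).1.eigenvalues) *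
    (star (Matrix.posSemidef_self_mul_conjTranspose (G.adjMatrix ℝ)).1.eigenvectorUnitary :
      Matrix (Fin n) (Fin n) ℝ)) i i

open scoped MatrixOrder

namespace Matrix

variable {ι : Type*} [Fintype ι] {S : Matrix ι ι ℝ}

lemma IsHermitian.mul_self_apply_self (hS : S.IsHermitian) (i : ι) :
    (S * S) i i = ∑ j, S i j ^ 2 := by
  simp only [mul_apply, sq, ← hS.apply i, star_trivial]

lemma PosSemidef.mulVec_eq_smul_of_mul_self_mulVec_eq (hS : S.PosSemidef) {x : ι → ℝ} {c : ℝ}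
    (hc : 0 < c) (h : (S * S) *ᵥ x = c ^ 2 • x) : S *ᵥ x = c • x := by
  set y := S *ᵥ x - c • x
  -- `y` lies in the eigenspace of `S` for `-c < 0`, which is trivial since `S` is PSD.
  have hSy : S *ᵥ y = (-c) • y := by
    simp only [y, mulVec_sub, mulVec_smul, mulVec_mulVec, h]
    module
  have hyy : y ⬝ᵥ y = 0 := by
    have hpos : 0 ≤ y ⬝ᵥ (S *ᵥ y) := by simpa using hS.dotProduct_mulVec_nonneg y
    rw [hSy, dotProduct_smul, smul_eq_mul] at hpos
    have : 0 ≤ y ⬝ᵥ y := Fintype.sum_nonneg fun i ↦ mul_self_nonneg (y i)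
    nlinarith
  exact sub_eq_zero.mp (dotProduct_self_eq_zero.mp hyy)

lemma PosSemidef.apply_self_le (hS : S.PosSemidef) {c : ℝ} (hc : 0 ≤ c) {i : ι}
    (h : (S * S) i i ≤ c ^ 2) : S i i ≤ c := by
  have hsq : S i i ^ 2 ≤ (S * S) i i := by
    rw [hS.1.mul_self_apply_self]
    exact single_le_sum (f := fun j ↦ S i j ^ 2) (fun j _ ↦ sq_nonneg _) (mem_univ i)
  exact abs_le_of_sq_le_sq' (hsq.trans h) hc |>.2

variable [DecidableEq ι]

lemma mulVec_single_one_eq_smul_iff {R : Type*} [NonAssocSemiring R] {M : Matrix ι ι R} {i : ι}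
    {c : R} : M *ᵥ Pi.single i 1 = c • Pi.single i 1 ↔ M i i = c ∧ ∀ j ≠ i, M j i = 0 := by
  rw [mulVec_single_one, funext_iff]
  constructor
  · intro h
    refine ⟨by simpa using h i, fun j hj ↦ by simpa [hj] using h j⟩
  · rintro ⟨hii, hji⟩ j
    rcases eq_or_ne j i with rfl | hj
    · simpa using hii
    · simpa [hj] using hji j hj

lemma IsHermitian.mulVec_single_one_eq_smul (hS : S.IsHermitian) {i : ι}
    (h : (S * S) i i ≤ S i i ^ 2) : S *ᵥ Pi.single i 1 = S i i • Pi.single i 1 := by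
  ext j
  rcases eq_or_ne j i with rfl | hji
  · simp
  have hpair : S i i ^ 2 + S i j ^ 2 ≤ (S * S) i i := by
    rw [hS.mul_self_apply_self, ← sum_pair (f := fun k ↦ S i k ^ 2) hji.symm]
    exact sum_le_sum_of_subset_of_nonneg (subset_univ _) fun k _ _ ↦ sq_nonneg (S i k)
  have hij : S i j = 0 := by nlinarith
  simp [hji, ← hS.apply j i, hij]

lemma PosSemidef.apply_self_eq_iff (hS : S.PosSemidef) {c : ℝ} (hc : 0 < c) {i : ι}
    (h : (S * S) i i ≤ c ^ 2) :
    S i i = c ↔ (S * S) *ᵥ Pi.single i 1 = c ^ 2 • Pi.single i 1 := by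
  constructor
  · intro hii
    have hSe := hS.1.mulVec_single_one_eq_smul (hii ▸ h)
    rw [← mulVec_mulVec, hSe, mulVec_smul, hSe, hii, smul_smul, sq]
  · intro hSSe
    have := congrFun (hS.mulVec_eq_smul_of_mul_self_mulVec_eq hc hSSe) i
    simpa using this

end Matrix

namespace SimpleGraph

variable {V : Type*} {G : SimpleGraph V}

lemma forall_reachable_adj_iff {v : V} :
    (∀ u w, G.Reachable v u → G.Adj u w → u = v ∨ w = v) ↔
      ∀ u w, G.Adj u w → G.Adj w v → u = v := by
  constructor
  · intro h u w huw hwv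
    rcases h w u hwv.symm.reachable huw.symm with rfl | rfl
    · exact (G.loopless.irrefl _ hwv).elim
    · rfl
  · intro h u w ⟨p⟩ huw
    have hnbr : ∀ x y (q : G.Walk x y), y = v → x = v ∨ G.Adj v x := by
      intro x y q
      induction q with
      | nil => exact .inl
      | cons hab q ih =>
        intro hy
        rcases ih hy with rfl | hvb
        · exact .inr hab.symm
        · exact .inl (h _ _ hab hvb.symm)
    rcases hnbr u v p.reverse rfl with rfl | hvu
    · exact .inl rfl
    · exact .inr (h w u huw.symm hvu.symm)

variable [Fintype V] [DecidableRel G.Adj]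
  {α : Type*} [Semiring α] [LinearOrder α] [IsStrictOrderedRing α]

lemma adjMatrix_mul_self_apply_eq_zero_iff {u v : V} :
    (G.adjMatrix α * G.adjMatrix α) u v = 0 ↔ ∀ w, G.Adj u w → ¬G.Adj w v := by
  simp only [adjMatrix_mul_apply, adjMatrix_apply, sum_boole, Nat.cast_eq_zero, card_eq_zero,
    filter_eq_empty_iff, mem_neighborFinset]

lemma adjMatrix_mul_self_mulVec_single_one_eq_iff [DecidableEq V] (k : ℕ) {v : V} :
    (G.adjMatrix α * G.adjMatrix α) *ᵥ Pi.single v 1 = (k : α) • Pi.single v 1 ↔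
      G.degree v = k ∧ ∀ u w, G.Reachable v u → G.Adj u w → u = v ∨ w = v := by
  rw [mulVec_single_one_eq_smul_iff, adjMatrix_mul_self_apply_self, Nat.cast_inj,
    forall_reachable_adj_iff]
  refine and_congr_right fun _ ↦ ⟨fun h u w huw hwv ↦ ?_, fun h u hu ↦ ?_⟩
  · by_contra hu
    exact adjMatrix_mul_self_apply_eq_zero_iff.mp (h u hu) w huw hwv
  · exact adjMatrix_mul_self_apply_eq_zero_iff.mpr fun w huw hwv ↦ hu (h u w huw hwv)

end SimpleGraph

lemma vertexEnergy_eq_sqrt_apply {n : ℕ} (G : SimpleGraph (Fin n)) [DecidableRel G.Adj]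
    (i : Fin n) :
    vertexEnergy G i = CFC.sqrt (G.adjMatrix ℝ * (G.adjMatrix ℝ)ᴴ) i i := by
  have hA := Matrix.posSemidef_self_mul_conjTranspose (G.adjMatrix ℝ)
  rw [CFC.sqrt_eq_cfc, cfc_nnreal_eq_real _ _ hA.nonneg, hA.1.cfc_eq]
  simp only [vertexEnergy, IsHermitian.cfc, Unitary.conjStarAlgAut_apply, Function.comp_def,
    RCLike.ofReal_real_eq_id, id, Real.coe_sqrt, Real.coe_toNNReal',
    max_eq_left (hA.eigenvalues_nonneg _)]

theorem stmt_10 {n : ℕ} (G : SimpleGraph (Fin n)) [DecidableRel G.Adj]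
    (v : Fin n) (hd : G.degree v ≤ 4) :
    vertexEnergy G v ≤ 2 ∧
    (vertexEnergy G v = 2 ↔
      (G.degree v = 4 ∧
        ∀ u w : Fin n, G.Reachable v u → G.Adj u w → u = v ∨ w = v)) := by
  have hA := posSemidef_self_mul_conjTranspose (G.adjMatrix ℝ)
  set S := CFC.sqrt (G.adjMatrix ℝ * (G.adjMatrix ℝ)ᴴ)
  have hS : S.PosSemidef := (CFC.sqrt_nonneg _).posSemidef
  have hSS : S * S = G.adjMatrix ℝ * G.adjMatrix ℝ := by
    rw [CFC.sqrt_mul_sqrt_self _ hA.nonneg, conjTranspose_eq_transpose_of_trivial,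
      G.transpose_adjMatrix]
  have hdeg : (S * S) v v ≤ 2 ^ 2 := by
    rw [hSS, G.adjMatrix_mul_self_apply_self]
    exact (Nat.cast_le.mpr hd).trans (by norm_num)
  rw [vertexEnergy_eq_sqrt_apply]
  refine ⟨hS.apply_self_le zero_le_two hdeg, ?_⟩
  rw [hS.apply_self_eq_iff two_pos hdeg, hSS, show (2 : ℝ) ^ 2 = (4 : ℕ) by norm_num,
    G.adjMatrix_mul_self_mulVec_single_one_eq_iff]
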